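/- If X has the xgamma distribution with parameter θ > 0, then E[X] = (θ+3)/(θ(1+θ)). -/

import Mathlib

/-!
Expanding the density, `x f(x) = θ²/(1+θ) · x e^{-θx} + θ³/(2(1+θ)) · x³ e^{-θx}`, and each term
is a Gamma integral `∫₀^∞ xⁿ e^{-θx} dx = n! / θⁿ⁺¹`.
-/

open MeasureTheory Real Set

lemma integrableOn_pow_mul_exp_neg_mul_Ioi (n : ℕ) {b : ℝ} (hb : 0 < b) :
    IntegrableOn (fun x : ℝ => x ^ n * exp (-b * x)) (Ioi 0) := by
  have hn : (-1 : ℝ) < n := by linarith [(n.cast_nonneg : (0 : ℝ) ≤ n)]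
  refine (integrableOn_rpow_mul_exp_neg_mul_rpow hn one_pos hb).congr_fun (fun x _ => ?_)
    measurableSet_Ioi
  simp only [rpow_one, rpow_natCast]

lemma integral_pow_mul_exp_neg_mul_Ioi (n : ℕ) {b : ℝ} (hb : 0 < b) :
    ∫ x in Ioi (0 : ℝ), x ^ n * exp (-b * x) = n.factorial / b ^ (n + 1) := by
  have hGamma := integral_rpow_mul_exp_neg_mul_Ioi (a := n + 1) (by positivity) hb
  rw [add_sub_cancel_right, Gamma_nat_eq_factorial, one_div, inv_rpow hb.le,
    ← Nat.cast_succ, rpow_natCast] at hGamma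
  rw [div_eq_inv_mul, ← hGamma]
  simp only [rpow_natCast, neg_mul]

theorem xgamma_mean (θ : ℝ) (hθ : 0 < θ) :
    ∫ x in Set.Ioi (0:ℝ), x * ((θ^2 / (1 + θ)) * (1 + (θ/2) * x^2) * Real.exp (-θ * x)) =
      (θ + 3) / (θ * (1 + θ)) := by
  have hsplit : (fun x : ℝ => x * ((θ^2 / (1 + θ)) * (1 + (θ/2) * x^2) * exp (-θ * x))) =
      fun x => θ^2 / (1 + θ) * (x ^ 1 * exp (-θ * x))
        + θ^3 / (2 * (1 + θ)) * (x ^ 3 * exp (-θ * x)) := by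
    ext x
    field_simp
  rw [hsplit, integral_add ((integrableOn_pow_mul_exp_neg_mul_Ioi 1 hθ).const_mul _)
      ((integrableOn_pow_mul_exp_neg_mul_Ioi 3 hθ).const_mul _),
    integral_const_mul, integral_const_mul, integral_pow_mul_exp_neg_mul_Ioi 1 hθ,
    integral_pow_mul_exp_neg_mul_Ioi 3 hθ]
  norm_num [Nat.factorial]
  field_simp
  ring
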